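/- arXiv:1201.2096 — 9 statements merged into one kernel-verified Lean document; each statement's English description precedes it below -/
import Mathlib

section
/- If Θ is a λ-BK-space (a BK-space containing all canonical vectors e_i such that the norm of every finite truncation {c_i}_{i=1}^n is at most λ times the norm of {c_i}_{i=1}^∞), W is a dense subspace of the Banach space X₂, and {g_i} is a sequence in X₂* such that for every f ∈ W one has {g_i(f)} ∈ Θ with A‖f‖₁ ≤ ‖{g_i(f)}‖_Θ ≤ B‖f‖₂, then for every f ∈ X₂ one has {g_i(f)} ∈ Θ with A‖f‖₁ ≤ ‖{g_i(f)}‖_Θ ≤ λB‖f‖₂; i.e., {g_i} is an (X₁,Θ,X₂)-frame with bounds A, λB. -/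
open Filter Finset

/-- The `i`-th canonical sequence vector. -/
def e (i : ℕ) : ℕ → ℝ := fun j => if j = i then 1 else 0

/-- Truncation of a sequence to its first `n` coordinates. -/
def trunc (n : ℕ) (c : ℕ → ℝ) : ℕ → ℝ := fun j => if j < n then c j else 0

/-- `N` is a norm on the real vector space `V`. -/
def IsNormOn {V : Type*} [AddCommGroup V] [Module ℝ V] (N : V → ℝ) : Prop :=
  (∀ x, 0 ≤ N x) ∧ (∀ x y, N (x + y) ≤ N x + N y) ∧
  (∀ (a : ℝ) (x : V), N (a • x) = |a| * N x) ∧ ∀ x, N x = 0 → x = 0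

lemma aux_neg {V : Type*} [AddCommGroup V] [Module ℝ V] {N : V → ℝ}
    (h : IsNormOn N) (x : V) : N (-x) = N x := by
  have := h.2.2.1 (-1 : ℝ) x
  simpa using this

lemma aux_abs_sub {V : Type*} [AddCommGroup V] [Module ℝ V] {N : V → ℝ}
    (h : IsNormOn N) (x y : V) : |N x - N y| ≤ N (x - y) := by
  refine abs_sub_le_iff.mpr ⟨?_, ?_⟩
  · have := h.2.1 (x - y) y
    rw [sub_add_cancel] at this
    linarith
  · have := h.2.1 (y - x) x
    rw [sub_add_cancel] at this
    have h2 : N (y - x) = N (x - y) := by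
      rw [← neg_sub x y, aux_neg h]
    linarith

lemma aux_tendsto {V : Type*} [AddCommGroup V] [Module ℝ V] {N : V → ℝ}
    (h : IsNormOn N) {u : ℕ → V} {x : V}
    (hu : Tendsto (fun n => N (u n - x)) atTop (nhds 0)) :
    Tendsto (fun n => N (u n)) atTop (nhds (N x)) := by
  rw [← tendsto_sub_nhds_zero_iff]
  exact squeeze_zero_norm (fun n => aux_abs_sub h (u n) x) hu

/-- If `Θ` is a `λ`-BK-space, `W` a dense subspace of the Banach space `X₂`
(with a second, weaker norm `n1` playing the role of `‖·‖₁` of `X₁`), and the frame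
inequalities hold on `W`, then they hold on all of `X₂` with bounds `A, λB`. -/
theorem statement0
    {X : Type*} [AddCommGroup X] [Module ℝ X]
    (n1 n2 : X → ℝ) (hn1 : IsNormOn n1) (hn2 : IsNormOn n2)
    (hle : ∀ f, n1 f ≤ n2 f)
    -- `X₂` is a Banach space w.r.t. `n2`
    (hX2complete : ∀ u : ℕ → X,
      (∀ ε > 0, ∃ N, ∀ m ≥ N, ∀ n ≥ N, n2 (u m - u n) < ε) →
      ∃ x, Tendsto (fun n => n2 (u n - x)) atTop (nhds 0))
    -- `Θ` is a `λ`-BK-space: a Banach sequence space with continuous coordinate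
    -- functionals, containing all canonical vectors, with the truncation estimate
    (memT : (ℕ → ℝ) → Prop) (nT : (ℕ → ℝ) → ℝ)
    (hT0 : memT 0) (hTadd : ∀ c d, memT c → memT d → memT (c + d))
    (hTsmul : ∀ (a : ℝ) c, memT c → memT (a • c))
    (hnT : IsNormOn nT)
    (hTcomplete : ∀ u : ℕ → (ℕ → ℝ), (∀ n, memT (u n)) →
      (∀ ε > 0, ∃ N, ∀ m ≥ N, ∀ n ≥ N, nT (u m - u n) < ε) →
      ∃ c, memT c ∧ Tendsto (fun n => nT (u n - c)) atTop (nhds 0))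
    (hBK : ∀ i, ∃ K, ∀ c, memT c → |c i| ≤ K * nT c)
    (lam : ℝ) (hlam : 1 ≤ lam)
    (hTe : ∀ i, memT (e i))
    (hTtrunc : ∀ c, memT c → ∀ n, memT (trunc n c) ∧ nT (trunc n c) ≤ lam * nT c)
    -- the sequence of functionals `g_i ∈ X₂*`
    (g : ℕ → X →ₗ[ℝ] ℝ)
    (hgbdd : ∀ i, ∃ M, ∀ f, |g i f| ≤ M * n2 f)
    -- `W` is a dense subspace of `X₂`
    (W : Submodule ℝ X)
    (hWdense : ∀ f : X, ∀ ε > 0, ∃ w ∈ W, n2 (f - w) < ε)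
    (A Bb : ℝ) (hA : 0 < A) (hAB : A ≤ Bb)
    -- frame inequalities on `W`
    (hframeW : ∀ f ∈ W, memT (fun i => g i f) ∧
      A * n1 f ≤ nT (fun i => g i f) ∧ nT (fun i => g i f) ≤ Bb * n2 f) :
    -- conclusion: `{g_i}` is an `(X₁, Θ, X₂)`-frame with bounds `A, λB`
    ∀ f : X, memT (fun i => g i f) ∧
      A * n1 f ≤ nT (fun i => g i f) ∧ nT (fun i => g i f) ≤ lam * Bb * n2 f := by
  intro f
  have hBpos : 0 < Bb := lt_of_lt_of_le hA hAB
  -- approximating sequence from `W`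
  have hw : ∀ k : ℕ, ∃ w ∈ W, n2 (f - w) < 1 / (k + 1) := fun k =>
    hWdense f (1 / (k + 1)) (by positivity)
  choose w hwW hwlt using hw
  have hwt : Tendsto (fun k => n2 (f - w k)) atTop (nhds 0) := by
    apply squeeze_zero (fun k => hn2.1 _) (fun k => (hwlt k).le)
    exact tendsto_one_div_add_atTop_nhds_zero_nat
  set c : ℕ → ℕ → ℝ := fun k i => g i (w k) with hc
  have hmemc : ∀ k, memT (c k) := fun k => (hframeW (w k) (hwW k)).1
  have hsub : ∀ k m, c k - c m = fun i => g i (w k - w m) := by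
    intro k m; funext i; simp [hc, map_sub]
  -- the sequence `c k` is Cauchy in `Θ`
  have hcauchy : ∀ ε > 0, ∃ N, ∀ m ≥ N, ∀ n ≥ N, nT (c m - c n) < ε := by
    intro ε hε
    obtain ⟨N, hN⟩ := exists_nat_one_div_lt (show 0 < ε / (2 * Bb) by positivity)
    refine ⟨N, fun m hm n hn => ?_⟩
    have hmem : w m - w n ∈ W := W.sub_mem (hwW m) (hwW n)
    have h1 := (hframeW _ hmem).2.2
    rw [hsub]
    have ht : n2 (w m - w n) ≤ n2 (f - w m) + n2 (f - w n) := by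
      have htri := hn2.2.1 (w m - f) (f - w n)
      have heq : w m - f + (f - w n) = w m - w n := by abel
      rw [heq] at htri
      have hne : n2 (w m - f) = n2 (f - w m) := by
        rw [← aux_neg hn2 (f - w m)]; congr 1; abel
      linarith
    have hNm : (1 : ℝ) / (m + 1) ≤ 1 / (N + 1) := by
      gcongr
    have hNn : (1 : ℝ) / (n + 1) ≤ 1 / (N + 1) := by
      gcongr
    have h2 : n2 (f - w m) < ε / (2 * Bb) := lt_of_lt_of_le (lt_of_lt_of_le (hwlt m) hNm) hN.le
    have h3 : n2 (f - w n) < ε / (2 * Bb) := lt_of_lt_of_le (lt_of_lt_of_le (hwlt n) hNn) hN.le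
    have h4 : n2 (w m - w n) < ε / Bb := by
      have : ε / (2 * Bb) + ε / (2 * Bb) = ε / Bb := by field_simp; ring
      linarith
    calc nT (fun i => g i (w m - w n)) ≤ Bb * n2 (w m - w n) := h1
      _ < Bb * (ε / Bb) := by exact (mul_lt_mul_iff_right₀ hBpos).mpr h4
      _ = ε := by field_simp
  obtain ⟨cl, hclmem, hclt⟩ := hTcomplete c hmemc hcauchy
  -- identify the limit coordinatewise
  have hmemsub : ∀ k, memT (c k - cl) := by
    intro k
    have := hTadd (c k) ((-1 : ℝ) • cl) (hmemc k) (hTsmul (-1) cl hclmem)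
    simpa [sub_eq_add_neg] using this
  have hEq : (fun i => g i f) = cl := by
    funext i
    obtain ⟨K, hK⟩ := hBK i
    obtain ⟨M, hM⟩ := hgbdd i
    have h1 : Tendsto (fun k => c k i) atTop (nhds (cl i)) := by
      rw [← tendsto_sub_nhds_zero_iff]
      refine squeeze_zero_norm (a := fun k => K * nT (c k - cl)) (fun k => ?_) ?_
      · simpa [Pi.sub_apply] using hK (c k - cl) (hmemsub k)
      · simpa using hclt.const_mul K
    have h2 : Tendsto (fun k => c k i) atTop (nhds (g i f)) := by
      rw [← tendsto_sub_nhds_zero_iff]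
      refine squeeze_zero_norm (a := fun k => M * n2 (f - w k)) (fun k => ?_) ?_
      · have : c k i - g i f = -(g i (f - w k)) := by simp [hc, map_sub]
        rw [this, norm_neg]
        exact hM (f - w k)
      · simpa using hwt.const_mul M
    exact tendsto_nhds_unique h2 h1
  -- pass to the limit in the frame inequalities
  have hnTc : Tendsto (fun k => nT (c k)) atTop (nhds (nT cl)) := aux_tendsto hnT hclt
  have hwft : Tendsto (fun k => n2 (w k - f)) atTop (nhds 0) := by
    have : ∀ k, n2 (w k - f) = n2 (f - w k) := fun k => by
      rw [← aux_neg hn2 (f - w k)]; congr 1; abel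
    simpa [this] using hwt
  have hn2w : Tendsto (fun k => n2 (w k)) atTop (nhds (n2 f)) := aux_tendsto hn2 hwft
  have hn1w : Tendsto (fun k => n1 (w k)) atTop (nhds (n1 f)) := by
    apply aux_tendsto hn1
    exact squeeze_zero (fun k => hn1.1 _) (fun k => hle _) hwft
  have hlow : A * n1 f ≤ nT cl := by
    refine le_of_tendsto_of_tendsto' (hn1w.const_mul A) hnTc fun k => ?_
    exact (hframeW _ (hwW k)).2.1
  have hup : nT cl ≤ Bb * n2 f := by
    refine le_of_tendsto_of_tendsto' hnTc (hn2w.const_mul Bb) fun k => ?_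
    exact (hframeW _ (hwW k)).2.2
  have hup' : nT cl ≤ lam * Bb * n2 f := by
    have h0 : 0 ≤ n2 f := hn2.1 f
    nlinarith [mul_nonneg (mul_nonneg (sub_nonneg.mpr hlam) hBpos.le) h0]
  rw [hEq]
  exact ⟨hclmem, hlow, hup'⟩
end

section
/- Let {g_i} be a general pre-F-frame for the Fréchet space X_F with respect to the Fréchet sequence space Θ_F. Then the range R(U) of the analysis operator U : X_F → Θ_F, Uf = {g_i(f)}, is closed in Θ_F, and the inverse operator U⁻¹ : R(U) → X_F is continuous. -/
open Filter Finset

/-- For a general pre-F-frame, the range of the analysis operator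
`U : X_F → Θ_F` is (sequentially) closed in `Θ_F`, and `U⁻¹` is continuous on the range. -/
theorem statement2
    {X : Type*} [AddCommGroup X] [Module ℝ X]
    -- `X_F` with its increasing family of norms `‖·‖_s`
    (nX : ℕ → X → ℝ) (hnX : ∀ t, IsNormOn (nX t))
    (hXmono : ∀ t f, nX t f ≤ nX (t + 1) f)
    -- the Fréchet sequence space `Θ_F = ⋂ Θ_s`, each `Θ_s` a BK-space
    (memT : ℕ → (ℕ → ℝ) → Prop) (nT : ℕ → (ℕ → ℝ) → ℝ)
    (hnT : ∀ t, IsNormOn (nT t))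
    (hTmono : ∀ t c, nT t c ≤ nT (t + 1) c)
    (hTnest : ∀ t c, memT (t + 1) c → memT t c)
    (hT0 : ∀ t, memT t 0) (hTadd : ∀ t c d, memT t c → memT t d → memT t (c + d))
    (hTsmul : ∀ t (a : ℝ) c, memT t c → memT t (a • c))
    (hBK : ∀ t i, ∃ K, ∀ c, memT t c → |c i| ≤ K * nT t c)
    -- `{g_i}` is a general pre-F-frame for `X_F` w.r.t. `Θ_F`
    (g : ℕ → X →ₗ[ℝ] ℝ) (s st : ℕ → ℕ)
    (hs : Monotone s) (hstend : Tendsto s atTop atTop)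
    (hst : Monotone st) (hsttend : Tendsto st atTop atTop)
    (hsle : ∀ k, s k ≤ st k)
    (A B : ℕ → ℝ) (hA : ∀ k, 0 < A k) (hB : ∀ k, 0 < B k)
    (hframe : ∀ f : X, (∀ t, memT t (fun i => g i f)) ∧
      ∀ k, A k * nX (s k) f ≤ nT k (fun i => g i f) ∧
        nT k (fun i => g i f) ≤ B k * nX (st k) f)
    -- `X_F` is a Fréchet space: complete w.r.t. the family of norms
    (hXcomplete : ∀ u : ℕ → X,
      (∀ t, ∀ ε > 0, ∃ N, ∀ m ≥ N, ∀ n ≥ N, nX t (u m - u n) < ε) →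
      ∃ x : X, ∀ t, Tendsto (fun n => nX t (u n - x)) atTop (nhds 0)) :
    -- the range of `U` is closed in `Θ_F`
    (∀ (u : ℕ → X) (b : ℕ → ℝ), (∀ t, memT t b) →
      (∀ k, Tendsto (fun n => nT k ((fun i => g i (u n)) - b)) atTop (nhds 0)) →
      ∃ a : X, (fun i => g i a) = b) ∧
    -- and `U⁻¹ : R(U) → X_F` is continuous
    (∀ k, ∀ f : X, nX (s k) f ≤ (A k)⁻¹ * nT k (fun i => g i f)) := by
  -- monotonicity of the norms in the index
  have hXmono' : ∀ t t' : ℕ, t ≤ t' → ∀ f, nX t f ≤ nX t' f := by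
    intro t t' h f
    induction t', h using Nat.le_induction with
    | base => exact le_refl _
    | succ n hn ih => exact le_trans ih (hXmono n f)
  -- norm of a difference (symmetry)
  have hTsymm : ∀ k (c d : ℕ → ℝ), nT k (c - d) = nT k (d - c) := by
    intro k c d
    have : c - d = (-1 : ℝ) • (d - c) := by
      funext i; simp
    rw [this, (hnT k).2.2.1]
    simp
  -- membership of differences
  have hmemsub : ∀ t (c d : ℕ → ℝ), memT t c → memT t d → memT t (c - d) := by
    intro t c d hc hd
    have : c - d = c + (-1 : ℝ) • d := by funext i; simp; ring
    rw [this]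
    exact hTadd t _ _ hc (hTsmul t _ _ hd)
  constructor
  · intro u b hbmem hconv
    -- `U` applied to differences
    have hdiff : ∀ m n : ℕ,
        (fun i => g i (u m - u n)) = (fun i => g i (u m)) - (fun i => g i (u n)) := by
      intro m n; funext i; simp
    -- the sequence `u` is Cauchy in every norm
    have hcauchy : ∀ t, ∀ ε > 0, ∃ N, ∀ m ≥ N, ∀ n ≥ N, nX t (u m - u n) < ε := by
      intro t ε hε
      obtain ⟨k, hk⟩ := (hstend.eventually_ge_atTop t).exists
      have hAk := hA k
      have hεk : (0 : ℝ) < A k * ε / 2 := by positivity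
      have hev : ∀ᶠ n in atTop, nT k ((fun i => g i (u n)) - b) < A k * ε / 2 :=
        (hconv k).eventually_lt_const hεk
      obtain ⟨N, hN⟩ := eventually_atTop.1 hev
      refine ⟨N, fun m hm n hn => ?_⟩
      have h1 := hN m hm
      have h2 := hN n hn
      -- triangle inequality
      have htri : nT k ((fun i => g i (u m)) - (fun i => g i (u n))) ≤
          nT k ((fun i => g i (u m)) - b) + nT k ((fun i => g i (u n)) - b) := by
        have heq : (fun i => g i (u m)) - (fun i => g i (u n)) =
            ((fun i => g i (u m)) - b) + (b - (fun i => g i (u n))) := by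
          funext i; simp
        rw [heq]
        calc nT k (((fun i => g i (u m)) - b) + (b - (fun i => g i (u n)))) ≤
            nT k ((fun i => g i (u m)) - b) + nT k (b - (fun i => g i (u n))) :=
              (hnT k).2.1 _ _
          _ = nT k ((fun i => g i (u m)) - b) + nT k ((fun i => g i (u n)) - b) := by
              rw [hTsymm k b (fun i => g i (u n))]
      have hlow := ((hframe (u m - u n)).2 k).1
      rw [hdiff m n] at hlow
      have hABlt : A k * nX (s k) (u m - u n) < A k * ε := by
        calc A k * nX (s k) (u m - u n) ≤
            nT k ((fun i => g i (u m)) - (fun i => g i (u n))) := hlow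
          _ ≤ _ := htri
          _ < A k * ε / 2 + A k * ε / 2 := add_lt_add h1 h2
          _ = A k * ε := by ring
      have hlt : nX (s k) (u m - u n) < ε := lt_of_mul_lt_mul_left hABlt (hA k).le
      exact lt_of_le_of_lt (hXmono' t (s k) hk _) hlt
    obtain ⟨x, hx⟩ := hXcomplete u hcauchy
    refine ⟨x, funext fun i => ?_⟩
    obtain ⟨K0, hK0⟩ := hBK 0 i
    set K : ℝ := max K0 0 with hK
    have hK0' : ∀ c, memT 0 c → |c i| ≤ K * nT 0 c := by
      intro c hc
      exact le_trans (hK0 c hc)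
        (mul_le_mul_of_nonneg_right (le_max_left _ _) ((hnT 0).1 c))
    -- g i (u n) → b i
    have hmem1 : ∀ n : ℕ, memT 0 ((fun i => g i (u n)) - b) := fun n =>
      hmemsub 0 _ _ ((hframe (u n)).1 0) (hbmem 0)
    have htend1 : Tendsto (fun n => |g i (u n) - b i|) atTop (nhds 0) := by
      have hbound : ∀ n, |g i (u n) - b i| ≤ K * nT 0 ((fun i => g i (u n)) - b) := by
        intro n
        have := hK0' _ (hmem1 n)
        simpa using this
      have hK0tend : Tendsto (fun n => K * nT 0 ((fun i => g i (u n)) - b))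
          atTop (nhds 0) := by
        simpa using (hconv 0).const_mul K
      exact squeeze_zero (fun n => abs_nonneg _) hbound hK0tend
    have hlim1 : Tendsto (fun n => g i (u n)) atTop (nhds (b i)) := by
      rw [tendsto_iff_dist_tendsto_zero]
      simpa [Real.dist_eq] using htend1
    -- g i (u n) → g i x
    have htend2 : Tendsto (fun n => |g i (u n) - g i x|) atTop (nhds 0) := by
      have hbound : ∀ n, |g i (u n) - g i x| ≤
          K * (B 0 * nX (st 0) (u n - x)) := by
        intro n
        have h1 : |g i (u n - x)| ≤ K * nT 0 (fun j => g j (u n - x)) :=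
          hK0' _ ((hframe (u n - x)).1 0)
        have h2 : nT 0 (fun j => g j (u n - x)) ≤ B 0 * nX (st 0) (u n - x) :=
          ((hframe (u n - x)).2 0).2
        have h3 : K * nT 0 (fun j => g j (u n - x)) ≤
            K * (B 0 * nX (st 0) (u n - x)) :=
          mul_le_mul_of_nonneg_left h2 (le_max_right K0 0)
        have h4 : |g i (u n) - g i x| = |g i (u n - x)| := by simp
        rw [h4]
        exact le_trans h1 h3
      have htend : Tendsto (fun n => K * (B 0 * nX (st 0) (u n - x)))
          atTop (nhds 0) := by
        simpa using ((hx (st 0)).const_mul (B 0)).const_mul K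
      exact squeeze_zero (fun n => abs_nonneg _) hbound htend
    have hlim2 : Tendsto (fun n => g i (u n)) atTop (nhds (g i x)) := by
      rw [tendsto_iff_dist_tendsto_zero]
      simpa [Real.dist_eq] using htend2
    exact tendsto_nhds_unique hlim2 hlim1
  · intro k f
    have h := ((hframe f).2 k).1
    have hAk := hA k
    calc nX (s k) f = (A k)⁻¹ * (A k * nX (s k) f) := by field_simp
      _ ≤ (A k)⁻¹ * nT k (fun i => g i f) :=
          mul_le_mul_of_nonneg_left h (inv_nonneg.2 hAk.le)
end

section
/- Let {g_i} be a general pre-F-frame for X_F with respect to Θ_F and U : X_F → Θ_F its analysis operator. Then there exists a continuous projection P of Θ_F onto R(U) if and only if there exists a continuous linear operator V : Θ_F → X_F with V{g_i(f)} = f for all f ∈ X_F. -/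
open Filter Finset

/-- For a general pre-F-frame, there is a continuous projection of `Θ_F`
onto `R(U)` iff there is a continuous operator `V : Θ_F → X_F` with `V{g_i(f)} = f`. -/
theorem statement3
    {X : Type*} [AddCommGroup X] [Module ℝ X]
    -- `X_F` with its increasing family of norms `‖·‖_s`
    (nX : ℕ → X → ℝ) (hnX : ∀ t, IsNormOn (nX t))
    (hXmono : ∀ t f, nX t f ≤ nX (t + 1) f)
    -- the Fréchet sequence space `Θ_F = ⋂ Θ_s`, each `Θ_s` a BK-space
    (memT : ℕ → (ℕ → ℝ) → Prop) (nT : ℕ → (ℕ → ℝ) → ℝ)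
    (hnT : ∀ t, IsNormOn (nT t))
    (hTmono : ∀ t c, nT t c ≤ nT (t + 1) c)
    (hTnest : ∀ t c, memT (t + 1) c → memT t c)
    (hT0 : ∀ t, memT t 0) (hTadd : ∀ t c d, memT t c → memT t d → memT t (c + d))
    (hTsmul : ∀ t (a : ℝ) c, memT t c → memT t (a • c))
    (hBK : ∀ t i, ∃ K, ∀ c, memT t c → |c i| ≤ K * nT t c)
    -- `{g_i}` is a general pre-F-frame for `X_F` w.r.t. `Θ_F`
    (g : ℕ → X →ₗ[ℝ] ℝ) (s st : ℕ → ℕ)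
    (hs : Monotone s) (hstend : Tendsto s atTop atTop)
    (hst : Monotone st) (hsttend : Tendsto st atTop atTop)
    (hsle : ∀ k, s k ≤ st k)
    (A B : ℕ → ℝ) (hA : ∀ k, 0 < A k) (hB : ∀ k, 0 < B k)
    (hframe : ∀ f : X, (∀ t, memT t (fun i => g i f)) ∧
      ∀ k, A k * nX (s k) f ≤ nT k (fun i => g i f) ∧
        nT k (fun i => g i f) ≤ B k * nX (st k) f) :
    -- existence of a continuous projection `P` of `Θ_F` onto `R(U)`
    (∃ P : (ℕ → ℝ) →ₗ[ℝ] (ℕ → ℝ),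
       (∀ c, (∀ t, memT t c) → ∃ f : X, P c = fun i => g i f) ∧
       (∀ f : X, P (fun i => g i f) = fun i => g i f) ∧
       (∀ k, ∃ p, ∃ C > 0, ∀ c, (∀ t, memT t c) → nT k (P c) ≤ C * nT p c))
    ↔
    -- existence of a continuous operator `V : Θ_F → X_F` with `V ∘ U = Id`
    (∃ V : (ℕ → ℝ) →ₗ[ℝ] X,
       (∀ f : X, V (fun i => g i f) = f) ∧
       (∀ k, ∃ p, ∃ C > 0, ∀ c, (∀ t, memT t c) → nX k (V c) ≤ C * nT p c)) := by

  -- The analysis operator `U f = {g_i f}`.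
  set U : X →ₗ[ℝ] (ℕ → ℝ) :=
    { toFun := fun f i => g i f
      map_add' := by intro a b; funext i; simp
      map_smul' := by intro a b; funext i; simp } with hU
  have hUapp : ∀ f : X, U f = fun i => g i f := fun f => rfl
  -- monotonicity of the norm families
  have nXmono : ∀ a b : ℕ, a ≤ b → ∀ f, nX a f ≤ nX b f := by
    intro a b hab f
    induction b with
    | zero => simp_all
    | succ n ih =>
      rcases Nat.lt_or_ge a (n+1) with h | h
      · exact le_trans (ih (Nat.lt_succ_iff.mp h)) (hXmono n f)
      · have : a = n + 1 := le_antisymm hab h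
        subst this; rfl
  constructor
  · rintro ⟨P, hP1, hP2, hP3⟩
    -- U is injective
    have hUinj : LinearMap.ker U = ⊥ := by
      rw [LinearMap.ker_eq_bot']
      intro f hf
      have h1 := (hframe f).2 0 |>.1
      have h0 : nT 0 (fun i => g i f) = 0 := by
        have : (fun i => g i f) = (0 : ℕ → ℝ) := hf
        rw [this]
        have := (hnT 0).2.2.1 0 0
        simpa using this
      rw [h0] at h1
      have hnn := (hnX (s 0)).1 f
      have : nX (s 0) f = 0 := le_antisymm (by nlinarith [hA 0]) hnn
      exact (hnX (s 0)).2.2.2 f this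
    obtain ⟨L, hL⟩ := LinearMap.exists_leftInverse_of_injective U hUinj
    have hLU : ∀ f : X, L (U f) = f := by
      intro f
      have := congrArg (fun T => T f) hL
      simpa using this
    refine ⟨L.comp P, ?_, ?_⟩
    · intro f
      have : P (fun i => g i f) = fun i => g i f := hP2 f
      simp only [LinearMap.comp_apply]
      rw [show (fun i => g i f) = U f from rfl] at this ⊢
      rw [this, hLU]
    · intro k
      obtain ⟨m, hm⟩ := (hstend.eventually_ge_atTop k).exists
      obtain ⟨p, C, hC, hbound⟩ := hP3 m
      refine ⟨p, C / A m, div_pos hC (hA m), ?_⟩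
      intro c hc
      obtain ⟨f, hf⟩ := hP1 c hc
      have hPU : P c = U f := hf
      have hVc : (L.comp P) c = f := by
        simp only [LinearMap.comp_apply, hPU, hLU]
      rw [hVc]
      have h1 : nX k f ≤ nX (s m) f := nXmono k (s m) hm f
      have h2 : A m * nX (s m) f ≤ nT m (fun i => g i f) := ((hframe f).2 m).1
      have h3 : nT m (P c) ≤ C * nT p c := hbound c hc
      rw [hPU, hUapp] at h3
      have hAm := hA m
      rw [div_mul_eq_mul_div, le_div_iff₀ hAm]
      nlinarith
  · rintro ⟨V, hV1, hV2⟩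
    refine ⟨U.comp V, ?_, ?_, ?_⟩
    · intro c _
      exact ⟨V c, rfl⟩
    · intro f
      simp only [LinearMap.comp_apply]
      rw [hV1 f]
      exact hUapp f
    · intro k
      obtain ⟨p, C, hC, hbound⟩ := hV2 (st k)
      refine ⟨p, B k * C, mul_pos (hB k) hC, ?_⟩
      intro c hc
      simp only [LinearMap.comp_apply]
      have h1 : nT k (fun i => g i (V c)) ≤ B k * nX (st k) (V c) :=
        ((hframe (V c)).2 k).2
      have h2 : nX (st k) (V c) ≤ C * nT p c := hbound c hc
      have := hB k
      calc nT k (U (V c)) = nT k (fun i => g i (V c)) := rfl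
        _ ≤ B k * nX (st k) (V c) := h1
        _ ≤ B k * (C * nT p c) := by nlinarith
        _ = B k * C * nT p c := by ring
end

section
/- Let 1 < p < 2 < q < ∞ and let g_i be the i-th coordinate functional on ℓ^p. Then {g_i} is an (ℓ^q, ℓ², ℓ^p)-frame with bounds A = B = 1 (i.e., for every c ∈ ℓ^p, ‖c‖_{ℓ^q} ≤ ‖c‖_{ℓ²} ≤ ‖c‖_{ℓ^p}), but the range of the analysis operator Ũ : ℓ^p → ℓ², Ũc = c, is not closed in ℓ². -/
/-!
For `0 < p ≤ q` and `f ∈ ℓ^p`, every coordinate satisfies `|fᵢ| ≤ ‖f‖_p`, so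
`∑ |fᵢ|^q ≤ ‖f‖_p^(q-p) ∑ |fᵢ|^p = ‖f‖_p^q`; this gives both norm inequalities.
The set `ℓ^p ∩ ℓ^2` contains all finitely supported sequences, hence is dense in `ℓ^2`;
were it closed it would be all of `ℓ^2`, but `n ↦ (n + 1) ^ (-1/p)` is square-summable
and not `p`-summable.
-/

open scoped ENNReal

namespace lp

variable {α : Type*} {E : α → Type*} [∀ i, NormedAddCommGroup (E i)]

theorem norm_le_norm_of_exponent_le {p q : ℝ≥0∞} (hp : 0 < p) (hpq : p ≤ q) (f : lp E p)
    (hfq : Memℓp f q) : ‖(⟨f, hfq⟩ : lp E q)‖ ≤ ‖f‖ := by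
  have hf : ∀ i, ‖f i‖ ≤ ‖f‖ := norm_apply_le_norm hp.ne' f
  rcases eq_or_ne q ⊤ with rfl | hq
  · exact norm_le_of_forall_le (norm_nonneg' f) hf
  have hp' : 0 < p.toReal := ENNReal.toReal_pos hp.ne' (ne_top_of_le_ne_top hq hpq)
  have hpq' : p.toReal ≤ q.toReal := ENNReal.toReal_mono hq hpq
  have hq' : 0 < q.toReal := hp'.trans_le hpq'
  have hsplit : ∀ x : ℝ, 0 ≤ x → x ^ q.toReal = x ^ p.toReal * x ^ (q.toReal - p.toReal) :=
    fun x hx => by rw [← Real.rpow_add' hx (by linarith), add_sub_cancel]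
  refine norm_le_of_tsum_le hq' (norm_nonneg' f) ?_
  calc ∑' i, ‖f i‖ ^ q.toReal
      ≤ ∑' i, ‖f i‖ ^ p.toReal * ‖f‖ ^ (q.toReal - p.toReal) := by
        refine Summable.tsum_le_tsum (fun i => ?_) (hfq.summable hq')
          (((lp.memℓp f).summable hp').mul_right _)
        rw [hsplit _ (norm_nonneg _)]
        gcongr
        exact hf i
    _ = ‖f‖ ^ q.toReal := by
        rw [tsum_mul_right, ← norm_rpow_eq_tsum hp', hsplit _ (norm_nonneg' f)]

theorem dense_setOf_memℓp {p : ℝ≥0∞} [Fact (1 ≤ p)] (hp : p ≠ ⊤) (r : ℝ≥0∞) :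
    Dense {f : lp E p | Memℓp f r} := by
  classical
  intro f
  refine mem_closure_of_tendsto (lp.hasSum_single hp f) (Filter.Eventually.of_forall fun s => ?_)
  change ⇑(∑ i ∈ s, lp.single p i (f i)) ∈ lp E r
  rw [coeFn_sum]
  exact AddSubgroup.sum_mem _ fun i _ => (lp.single r i (f i)).prop

end lp

theorem memℓp_nat_add_one_rpow_iff {a : ℝ} {r : ℝ≥0∞} (hr : 0 < r.toReal) :
    Memℓp (fun n : ℕ => ((n : ℝ) + 1) ^ a) r ↔ a * r.toReal < -1 := by
  rw [memℓp_gen_iff hr, ← Real.summable_nat_rpow,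
    ← summable_nat_add_iff (f := fun n : ℕ => (n : ℝ) ^ (a * r.toReal)) 1]
  refine summable_congr fun n => ?_
  rw [Real.norm_of_nonneg (by positivity), ← Real.rpow_mul (by positivity)]
  push_cast
  rfl

theorem statement4_general (p q : ℝ≥0∞) (hp1 : 1 < p) (hp2 : p < 2) (hq2 : 2 < q) :
    (∀ f : lp (fun _ : ℕ => ℝ) p,
      ∃ (h2 : Memℓp (⇑f) 2) (hq' : Memℓp (⇑f) q),
        ‖(⟨⇑f, hq'⟩ : lp (fun _ : ℕ => ℝ) q)‖ ≤ ‖(⟨⇑f, h2⟩ : lp (fun _ : ℕ => ℝ) 2)‖ ∧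
        ‖(⟨⇑f, h2⟩ : lp (fun _ : ℕ => ℝ) 2)‖ ≤ ‖f‖) ∧
    ¬ IsClosed {x : lp (fun _ : ℕ => ℝ) 2 | Memℓp (⇑x) p} := by
  have hp0 : 0 < p := zero_lt_one.trans hp1
  refine ⟨fun f => ?_, fun hclosed => ?_⟩
  · have h2 : Memℓp (⇑f) 2 := (lp.memℓp f).of_exponent_ge hp2.le
    exact ⟨h2, h2.of_exponent_ge hq2.le,
      lp.norm_le_norm_of_exponent_le (by norm_num) hq2.le (⟨f, h2⟩ : lp (fun _ : ℕ => ℝ) 2) _,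
      lp.norm_le_norm_of_exponent_le hp0 hp2.le f h2⟩
  have hptop : p ≠ ⊤ := (hp2.trans ENNReal.ofNat_lt_top).ne
  have hp : 0 < p.toReal := ENNReal.toReal_pos hp0.ne' hptop
  have hp2' : p.toReal < 2 := by
    rw [← ENNReal.toReal_ofNat 2]
    exact (ENNReal.toReal_lt_toReal hptop ENNReal.ofNat_ne_top).mpr hp2
  have hmem2 : Memℓp (fun n : ℕ => ((n : ℝ) + 1) ^ (-1 / p.toReal)) 2 := by
    rw [memℓp_nat_add_one_rpow_iff (by simp), ENNReal.toReal_ofNat, div_mul_eq_mul_div,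
      div_lt_iff₀ hp]
    linarith
  have hnot : ¬ Memℓp (fun n : ℕ => ((n : ℝ) + 1) ^ (-1 / p.toReal)) p := by
    rw [memℓp_nat_add_one_rpow_iff hp, div_mul_cancel₀ _ hp.ne']
    norm_num
  have hdense : Dense {x : lp (fun _ : ℕ => ℝ) 2 | Memℓp x p} :=
    lp.dense_setOf_memℓp ENNReal.ofNat_ne_top p
  have hx : (⟨_, hmem2⟩ : lp (fun _ : ℕ => ℝ) 2) ∈ {x : lp (fun _ : ℕ => ℝ) 2 | Memℓp x p} :=
    hclosed.closure_subset (hdense _)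
  exact hnot hx

/-- For `1 < p < 2 < q < ∞`, the coordinate functionals on `ℓ^p` form an
`(ℓ^q, ℓ^2, ℓ^p)`-frame with bounds `A = B = 1` (i.e. the norm inequalities
`‖c‖_q ≤ ‖c‖_2 ≤ ‖c‖_p` hold for every `c ∈ ℓ^p`), but the range of the analysis
operator (the set of elements of `ℓ^2` lying in `ℓ^p`) is not closed in `ℓ^2`. -/
theorem statement4 (p q : ℝ≥0∞) (hp1 : 1 < p) (hp2 : p < 2) (hq2 : 2 < q) (hq : q < ⊤) :
    (∀ f : lp (fun _ : ℕ => ℝ) p,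
      ∃ (h2 : Memℓp (⇑f) 2) (hq' : Memℓp (⇑f) q),
        ‖(⟨⇑f, hq'⟩ : lp (fun _ : ℕ => ℝ) q)‖ ≤ ‖(⟨⇑f, h2⟩ : lp (fun _ : ℕ => ℝ) 2)‖ ∧
        ‖(⟨⇑f, h2⟩ : lp (fun _ : ℕ => ℝ) 2)‖ ≤ ‖f‖) ∧
    ¬ IsClosed {x : lp (fun _ : ℕ => ℝ) 2 | Memℓp (⇑x) p} :=
  statement4_general p q hp1 hp2 hq2
end

section
/- Let {g_i} be an (X₁,Θ,X₂)-frame and suppose the range of the analysis operator Ũ : X₂ → Θ, Ũf = {g_i(f)}, is closed in Θ. Then {g_i} satisfies the lower Θ-frame inequality for X₂, i.e., there is a constant A' > 0 with A'‖f‖₂ ≤ ‖{g_i(f)}‖_Θ for all f ∈ X₂, and hence {g_i} is a Θ-frame for X₂. -/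
open Filter Finset

/-!
With `‖·‖₂` on `X₂` and the norm of `Θ` on sequences, the analysis operator `Ũ` is bounded
(upper frame bound) and injective (lower frame bound, since `‖·‖₁` is a norm). Its range is
closed in the complete space `Θ`, hence complete, so `Ũ` is a continuous linear bijection of
Banach spaces onto its range; the bounded inverse theorem yields the lower bound in `‖·‖₂`.
-/

open Set Function Topology

theorem IsComplete.of_subset_of_inter_closure_subset {α : Type*} [UniformSpace α] {s t : Set α}
    (ht : IsComplete t) (hst : s ⊆ t) (hs : t ∩ closure s ⊆ s) : IsComplete s := by
  intro l hl hls
  obtain ⟨x, hxt, hx⟩ := ht l hl (hls.trans (principal_mono.2 hst))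
  have : ClusterPt x (𝓟 s) := hl.1.mono (le_inf hx hls)
  exact ⟨x, hs ⟨hxt, mem_closure_iff_clusterPt.2 this⟩, hx⟩

theorem Metric.isComplete_of_cauchySeq_tendsto {α : Type*} [PseudoMetricSpace α] {s : Set α}
    (h : ∀ u : ℕ → α, (∀ n, u n ∈ s) → CauchySeq u → ∃ a ∈ s, Tendsto u atTop (𝓝 a)) :
    IsComplete s := by
  refine completeSpace_coe_iff_isComplete.1 (Metric.complete_of_cauchySeq_tendsto fun u hu => ?_)
  obtain ⟨a, ha, hua⟩ := h (fun n => u n) (fun n => (u n).2)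
    (uniformContinuous_subtype_val.comp_cauchySeq hu)
  exact ⟨⟨a, ha⟩, tendsto_subtype_rng.2 hua⟩

theorem ContinuousLinearMap.exists_pos_mul_norm_le_of_injective_of_isComplete_range
    {𝕜 E F : Type*} [NontriviallyNormedField 𝕜] [NormedAddCommGroup E] [NormedSpace 𝕜 E]
    [CompleteSpace E] [NormedAddCommGroup F] [NormedSpace 𝕜 F] (f : E →L[𝕜] F)
    (hf : Injective f) (hR : IsComplete (range f)) : ∃ c > 0, ∀ x, c * ‖x‖ ≤ ‖f x‖ := by
  have : CompleteSpace f.range := hR.completeSpace_coe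
  obtain ⟨K, hK⟩ := f.rangeRestrict.antilipschitz_of_injective_of_isClosed_range
    (fun x y hxy => hf (congrArg Subtype.val hxy))
    ((LinearMap.surjective_rangeRestrict (f : E →ₗ[𝕜] F)).range_eq ▸ isClosed_univ)
  refine ⟨(K + 1 : ℝ)⁻¹, by positivity, fun x => ?_⟩
  rw [inv_mul_le_iff₀ (by positivity)]
  calc ‖x‖ ≤ K * ‖f x‖ := ZeroHomClass.bound_of_antilipschitz _ hK x
    _ ≤ (K + 1) * ‖f x‖ := by gcongr; linarith

namespace IsNormOn

variable {V : Type*} [AddCommGroup V] [Module ℝ V] {N : V → ℝ}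

lemma map_zero (hN : IsNormOn N) : N 0 = 0 := by
  simpa using hN.2.2.1 0 0

lemma map_neg (hN : IsNormOn N) (x : V) : N (-x) = N x := by
  simpa using hN.2.2.1 (-1) x

end IsNormOn

/-- `V` normed by `N`. A type synonym, so that on `ℕ → ℝ` the norm topology does not clash with
the product topology. -/
def WithNormOn {V : Type*} (_N : V → ℝ) : Type _ := V

namespace WithNormOn

variable {V : Type*} [AddCommGroup V] [Module ℝ V] (N : V → ℝ)

instance : AddCommGroup (WithNormOn N) := inferInstanceAs (AddCommGroup V)

instance : Module ℝ (WithNormOn N) := inferInstanceAs (Module ℝ V)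

variable [hN : Fact (IsNormOn N)]

instance : NormedAddCommGroup (WithNormOn N) :=
  AddGroupNorm.toNormedAddCommGroup
    { toFun := N
      map_zero' := hN.out.map_zero
      add_le' := hN.out.2.1
      neg' := hN.out.map_neg
      eq_zero_of_map_eq_zero' := hN.out.2.2.2 }

instance : NormedSpace ℝ (WithNormOn N) where
  norm_smul_le a x := (hN.out.2.2.1 a x).le

theorem isComplete_setOf {p : V → Prop}
    (h : ∀ u : ℕ → V, (∀ n, p (u n)) →
      (∀ ε > 0, ∃ K, ∀ m ≥ K, ∀ n ≥ K, N (u m - u n) < ε) →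
      ∃ x, p x ∧ Tendsto (fun n => N (u n - x)) atTop (𝓝 0)) :
    IsComplete {x : WithNormOn N | p x} := by
  refine Metric.isComplete_of_cauchySeq_tendsto fun u hpu hu => ?_
  rw [Metric.cauchySeq_iff] at hu
  obtain ⟨x, hpx, hux⟩ := h u hpu fun ε hε => (hu ε hε).imp fun K hK m hm n hn =>
    (dist_eq_norm (u m) (u n)).symm.trans_lt (hK m hm n hn)
  exact ⟨x, hpx, tendsto_iff_norm_sub_tendsto_zero.2 hux⟩

end WithNormOn

theorem statement5_general
    {X : Type*} [AddCommGroup X] [Module ℝ X]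
    (n1 n2 : X → ℝ) (hn1 : IsNormOn n1) (hn2 : IsNormOn n2)
    -- `X₂` is a Banach space w.r.t. `n2`
    (hX2complete : ∀ u : ℕ → X,
      (∀ ε > 0, ∃ N, ∀ m ≥ N, ∀ n ≥ N, n2 (u m - u n) < ε) →
      ∃ x, Tendsto (fun n => n2 (u n - x)) atTop (nhds 0))
    -- `Θ` is a BK-space
    (memT : (ℕ → ℝ) → Prop) (nT : (ℕ → ℝ) → ℝ)
    (hnT : IsNormOn nT)
    (hTcomplete : ∀ u : ℕ → (ℕ → ℝ), (∀ n, memT (u n)) →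
      (∀ ε > 0, ∃ N, ∀ m ≥ N, ∀ n ≥ N, nT (u m - u n) < ε) →
      ∃ c, memT c ∧ Tendsto (fun n => nT (u n - c)) atTop (nhds 0))
    -- `{g_i}` is an `(X₁,Θ,X₂)`-frame with bounds `A ≤ B`
    (g : ℕ → X →ₗ[ℝ] ℝ) (A Bb : ℝ) (hA : 0 < A)
    (hframe : ∀ f : X, memT (fun i => g i f) ∧
      A * n1 f ≤ nT (fun i => g i f) ∧ nT (fun i => g i f) ≤ Bb * n2 f)
    -- the range of `Ũ` is closed in `Θ`
    (hclosed : ∀ c : ℕ → ℝ, memT c →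
      (∀ ε > 0, ∃ f : X, nT ((fun i => g i f) - c) < ε) →
      ∃ f : X, (fun i => g i f) = c) :
    -- conclusion: the lower `Θ`-frame inequality for `X₂`, hence a `Θ`-frame for `X₂`
    ∃ A' > 0, ∀ f : X, A' * n2 f ≤ nT (fun i => g i f) := by
  have : Fact (IsNormOn n2) := ⟨hn2⟩
  have : Fact (IsNormOn nT) := ⟨hnT⟩
  have : CompleteSpace (WithNormOn n2) := completeSpace_of_isComplete_univ <|
    WithNormOn.isComplete_setOf n2 fun u _ hu => (hX2complete u hu).imp fun _ hx => ⟨trivial, hx⟩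
  let U : WithNormOn n2 →L[ℝ] WithNormOn nT :=
    (LinearMap.pi g : WithNormOn n2 →ₗ[ℝ] WithNormOn nT).mkContinuous Bb fun f => (hframe f).2.2
  have hU_inj : Injective U := by
    refine (injective_iff_map_eq_zero U).2 fun f hf => hn1.2.2.2 f ?_
    have hlow := (hframe f).2.1
    rw [show (fun i => g i f) = 0 from hf, hnT.map_zero] at hlow
    exact le_antisymm (nonpos_of_mul_nonpos_right hlow hA) (hn1.1 f)
  have hU_range : IsComplete (range U) := by
    refine (WithNormOn.isComplete_setOf nT hTcomplete).of_subset_of_inter_closure_subset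
      (range_subset_iff.2 fun f => (hframe f).1) ?_
    rintro c ⟨hc, hc_closure⟩
    refine hclosed c hc fun ε hε => ?_
    obtain ⟨_, ⟨f, rfl⟩, hf⟩ := Metric.mem_closure_iff.1 hc_closure ε hε
    exact ⟨f, by rwa [dist_comm, dist_eq_norm] at hf⟩
  exact U.exists_pos_mul_norm_le_of_injective_of_isComplete_range hU_inj hU_range

/-- If `{g_i}` is an `(X₁,Θ,X₂)`-frame whose analysis operator has closed
range in `Θ`, then the lower `Θ`-frame inequality holds with the norm `‖·‖₂`, so `{g_i}`
is a `Θ`-frame for `X₂`. -/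
theorem statement5
    {X : Type*} [AddCommGroup X] [Module ℝ X]
    (n1 n2 : X → ℝ) (hn1 : IsNormOn n1) (hn2 : IsNormOn n2)
    (hle : ∀ f, n1 f ≤ n2 f)
    -- `X₂` is a Banach space w.r.t. `n2`
    (hX2complete : ∀ u : ℕ → X,
      (∀ ε > 0, ∃ N, ∀ m ≥ N, ∀ n ≥ N, n2 (u m - u n) < ε) →
      ∃ x, Tendsto (fun n => n2 (u n - x)) atTop (nhds 0))
    -- `Θ` is a BK-space
    (memT : (ℕ → ℝ) → Prop) (nT : (ℕ → ℝ) → ℝ)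
    (hT0 : memT 0) (hTadd : ∀ c d, memT c → memT d → memT (c + d))
    (hTsmul : ∀ (a : ℝ) c, memT c → memT (a • c))
    (hnT : IsNormOn nT)
    (hTcomplete : ∀ u : ℕ → (ℕ → ℝ), (∀ n, memT (u n)) →
      (∀ ε > 0, ∃ N, ∀ m ≥ N, ∀ n ≥ N, nT (u m - u n) < ε) →
      ∃ c, memT c ∧ Tendsto (fun n => nT (u n - c)) atTop (nhds 0))
    (hBK : ∀ i, ∃ K, ∀ c, memT c → |c i| ≤ K * nT c)
    -- `{g_i}` is an `(X₁,Θ,X₂)`-frame with bounds `A ≤ B`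
    (g : ℕ → X →ₗ[ℝ] ℝ) (A Bb : ℝ) (hA : 0 < A) (hAB : A ≤ Bb)
    (hframe : ∀ f : X, memT (fun i => g i f) ∧
      A * n1 f ≤ nT (fun i => g i f) ∧ nT (fun i => g i f) ≤ Bb * n2 f)
    -- the range of `Ũ` is closed in `Θ`
    (hclosed : ∀ c : ℕ → ℝ, memT c →
      (∀ ε > 0, ∃ f : X, nT ((fun i => g i f) - c) < ε) →
      ∃ f : X, (fun i => g i f) = c) :
    -- conclusion: the lower `Θ`-frame inequality for `X₂`, hence a `Θ`-frame for `X₂`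
    ∃ A' > 0, ∀ f : X, A' * n2 f ≤ nT (fun i => g i f) :=
  statement5_general n1 n2 hn1 hn2 hX2complete memT nT hnT hTcomplete g A Bb hA hframe hclosed
end

section
/- Let {g_i} be a general pre-F-frame for X_F with respect to Θ_F (Θ_s CB-spaces) and suppose {f_i} ⊂ X_F is such that for every k, {f_i} is a Θ_k*-Bessel sequence for X_{s_k}* and f = Σ g_i(f) f_i in X_F for every f ∈ X_F. Then the operator V : Θ_F → X_F defined by V{d_i} = Σ_{i=1}^∞ d_i f_i is well defined, satisfies V{g_i(f)} = f for all f ∈ X_F, and for each k there is a constant C_k with ‖Vd‖_{s_k} ≤ C_k |||d|||_k for all d ∈ Θ_F. -/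
open Filter Finset

/-!
Hahn–Banach turns the Bessel condition into the estimate
`‖∑_{i<n} c_i f_i‖_{s_k} ≤ B_k |||c|||_k` for all `c ∈ Θ_k` and all `n`. Applied to the tails
`c - trunc n c`, which tend to `0` in `Θ_k` (CB property), it makes the partial sums of `∑ c_i f_i`
Cauchy in every norm of `X_F`; `V c` is their limit, the estimate passes to the limit, and
`V {g_i(f)} = f` because limits in `X_F` are unique.
-/

section NormBasics

variable {V : Type*} [AddCommGroup V] [Module ℝ V]

def IsNormOn.toSeminorm {N : V → ℝ} (hN : IsNormOn N) : Seminorm ℝ V :=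
  Seminorm.of N hN.2.1 hN.2.2.1

@[simp]
theorem IsNormOn.toSeminorm_apply {N : V → ℝ} (hN : IsNormOn N) (x : V) :
    hN.toSeminorm x = N x :=
  rfl

theorem Seminorm.exists_dual_eq (p : Seminorm ℝ V) (x : V) :
    ∃ φ : Module.Dual ℝ V, (∀ y, |φ y| ≤ p y) ∧ φ x = p x := by
  rcases eq_or_ne x 0 with rfl | hx
  · exact ⟨0, by simp, by simp⟩
  let coord := LinearEquiv.coord ℝ V x hx
  have hle : ∀ y, (p x • coord.toLinearMap) y ≤ p y := fun y => by
    conv_rhs => rw [← LinearEquiv.toSpanNonzeroSingleton_symm_apply_smul ℝ V x hx y]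
    rw [map_smul_eq_mul, Real.norm_eq_abs]
    exact (mul_comm _ _).trans_le
      (mul_le_mul_of_nonneg_right (le_abs_self _) (apply_nonneg p x))
  obtain ⟨φ, hφx, hφ⟩ := Module.Dual.exists_extension_of_le_seminorm_real _ _ hle
  refine ⟨φ, hφ, ?_⟩
  simpa [coord, LinearEquiv.coord_self] using hφx ⟨x, Submodule.mem_span_singleton_self x⟩

theorem Seminorm.le_of_tendsto_sub (p : Seminorm ℝ V) {u : ℕ → V} {x : V} {b : ℝ}
    (hx : Tendsto (fun n => p (x - u n)) atTop (nhds 0)) (hu : ∀ n, p (u n) ≤ b) : p x ≤ b := by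
  have hle : ∀ n, p x ≤ p (x - u n) + b := fun n => by
    simpa using (map_add_le_add p (x - u n) (u n)).trans (add_le_add le_rfl (hu n))
  simpa using ge_of_tendsto' (hx.add_const b) hle

theorem IsNormOn.eq_of_tendsto_sub {N : V → ℝ} (hN : IsNormOn N) {u : ℕ → V} {x y : V}
    (hx : Tendsto (fun n => N (x - u n)) atTop (nhds 0))
    (hy : Tendsto (fun n => N (y - u n)) atTop (nhds 0)) : x = y := by
  have hle : ∀ n, N (x - y) ≤ N (x - u n) + N (y - u n) := fun n => by
    simpa [map_sub_rev hN.toSeminorm (u n)] using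
      map_add_le_add hN.toSeminorm (x - u n) (u n - y)
  have hzero : N (x - y) ≤ 0 := by simpa using ge_of_tendsto' (hx.add hy) hle
  exact sub_eq_zero.1 (hN.2.2.2 _ (hzero.antisymm (hN.1 _)))

end NormBasics

section PartialSums

variable {X : Type*} [AddCommGroup X] [Module ℝ X]

def partialSum (f : ℕ → X) (c : ℕ → ℝ) (n : ℕ) : X :=
  ∑ i ∈ range n, c i • f i

theorem partialSum_sub (f : ℕ → X) (c d : ℕ → ℝ) (n : ℕ) :
    partialSum f (c - d) n = partialSum f c n - partialSum f d n := by
  simp only [partialSum, Pi.sub_apply, sub_smul, sum_sub_distrib]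

theorem partialSum_trunc (f : ℕ → X) (c : ℕ → ℝ) {m n : ℕ} (h : m ≤ n) :
    partialSum f (trunc m c) n = partialSum f c m := by
  rw [partialSum, partialSum, ← sum_subset (range_subset_range.2 h)]
  · exact sum_congr rfl fun i hi => by simp [trunc, mem_range.1 hi]
  · intro i _ hi
    simp [trunc, show ¬ i < m by simpa using hi]

theorem trunc_mem {Θ : Submodule ℝ (ℕ → ℝ)} (he : ∀ i, e i ∈ Θ) (n : ℕ) (c : ℕ → ℝ) :
    trunc n c ∈ Θ := by
  have : trunc n c = ∑ i ∈ range n, c i • e i := by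
    ext j
    simp [trunc, e, Finset.sum_apply]
  exact this ▸ Θ.sum_mem fun i _ => Θ.smul_mem (c i) (he i)

theorem Seminorm.partialSum_le_of_bessel (p : Seminorm ℝ X) {Θ : (ℕ → ℝ) → Prop}
    {nT : (ℕ → ℝ) → ℝ} {f : ℕ → X} {B : ℝ}
    (hB : ∀ (h : X →ₗ[ℝ] ℝ) (M : ℝ), (∀ x, |h x| ≤ M * p x) →
      ∀ c, Θ c → ∀ n, |∑ i ∈ range n, c i * h (f i)| ≤ B * M * nT c)
    {c : ℕ → ℝ} (hc : Θ c) (n : ℕ) : p (partialSum f c n) ≤ B * nT c := by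
  obtain ⟨φ, hφ, hφx⟩ := p.exists_dual_eq (partialSum f c n)
  calc p (partialSum f c n) = φ (partialSum f c n) := hφx.symm
    _ = ∑ i ∈ range n, c i * φ (f i) := by simp [partialSum]
    _ ≤ |∑ i ∈ range n, c i * φ (f i)| := le_abs_self _
    _ ≤ B * 1 * nT c := hB φ 1 (by simpa using hφ) c hc n
    _ = B * nT c := by rw [mul_one]

theorem Seminorm.cauchy_partialSum (p : Seminorm ℝ X) {f : ℕ → X} {c τ : ℕ → ℝ}
    (hbound : ∀ n m, p (partialSum f (c - trunc n c) m) ≤ τ n)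
    (hτ : Tendsto τ atTop (nhds 0)) :
    ∀ ε > 0, ∃ N, ∀ m ≥ N, ∀ n ≥ N, p (partialSum f c m - partialSum f c n) < ε := by
  intro ε hε
  obtain ⟨N, hN⟩ := (hτ.eventually_lt_const (half_pos hε)).exists
  have tail : ∀ k ≥ N, p (partialSum f c k - partialSum f c N) ≤ τ N := fun k hk => by
    rw [← partialSum_trunc f c hk, ← partialSum_sub]
    exact hbound N k
  refine ⟨N, fun m hm n hn => ?_⟩
  calc p (partialSum f c m - partialSum f c n)
      = p ((partialSum f c m - partialSum f c N) - (partialSum f c n - partialSum f c N)) := by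
        rw [sub_sub_sub_cancel_right]
    _ ≤ p (partialSum f c m - partialSum f c N) + p (partialSum f c n - partialSum f c N) :=
        map_sub_le_add p _ _
    _ < ε := by linarith [tail m hm, tail n hn]

theorem cauchy_partialSum_of_tail_bound {p : ℕ → Seminorm ℝ X}
    (hp : ∀ t x, p t x ≤ p (t + 1) x) {s : ℕ → ℕ} (hs : Tendsto s atTop atTop)
    {f : ℕ → X} {c : ℕ → ℝ} {τ : ℕ → ℕ → ℝ}
    (hbound : ∀ k n m, p (s k) (partialSum f (c - trunc n c) m) ≤ τ k n)
    (hτ : ∀ k, Tendsto (τ k) atTop (nhds 0)) (t : ℕ) :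
    ∀ ε > 0, ∃ N, ∀ m ≥ N, ∀ n ≥ N, p t (partialSum f c m - partialSum f c n) < ε := by
  intro ε hε
  obtain ⟨k, hk⟩ := (hs.eventually_ge_atTop t).exists
  obtain ⟨N, hN⟩ := (p (s k)).cauchy_partialSum (hbound k) (hτ k) ε hε
  exact ⟨N, fun m hm n hn =>
    (monotone_nat_of_le_succ (fun t => hp t _) hk).trans_lt (hN m hm n hn)⟩

end PartialSums

theorem statement8_general
    {X : Type*} [AddCommGroup X] [Module ℝ X]
    -- `X_F` with its increasing family of norms `‖·‖_s`
    (nX : ℕ → X → ℝ) (hnX : ∀ t, IsNormOn (nX t))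
    (hXmono : ∀ t f, nX t f ≤ nX (t + 1) f)
    -- the Fréchet sequence space `Θ_F = ⋂ Θ_s`, each `Θ_s` a BK-space
    (memT : ℕ → (ℕ → ℝ) → Prop) (nT : ℕ → (ℕ → ℝ) → ℝ)
    (hT0 : ∀ t, memT t 0) (hTadd : ∀ t c d, memT t c → memT t d → memT t (c + d))
    (hTsmul : ∀ t (a : ℝ) c, memT t c → memT t (a • c))
    -- `{g_i}` is a general pre-F-frame for `X_F` w.r.t. `Θ_F`
    (g : ℕ → X →ₗ[ℝ] ℝ) (s st : ℕ → ℕ)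
    (hstend : Tendsto s atTop atTop)
    (A B : ℕ → ℝ)
    (hframe : ∀ f : X, (∀ t, memT t (fun i => g i f)) ∧
      ∀ k, A k * nX (s k) f ≤ nT k (fun i => g i f) ∧
        nT k (fun i => g i f) ≤ B k * nX (st k) f)
    -- `X_F` is complete, the `Θ_s` are CB-spaces
    (hXcomplete : ∀ u : ℕ → X,
      (∀ t, ∀ ε > 0, ∃ N, ∀ m ≥ N, ∀ n ≥ N, nX t (u m - u n) < ε) →
      ∃ x : X, ∀ t, Tendsto (fun n => nX t (u n - x)) atTop (nhds 0))
    (hTe : ∀ t i, memT t (e i))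
    (hCB : ∀ t c, memT t c → Tendsto (fun n => nT t (c - trunc n c)) atTop (nhds 0))
    -- the sequence `{f_i}`
    (fseq : ℕ → X)
    -- `{f_i}` is a `Θ_k^*`-Bessel sequence for `X_{s_k}^*` for every `k`
    (hBessel : ∀ k, ∃ Bb > 0, ∀ (h : X →ₗ[ℝ] ℝ) (M : ℝ),
      (∀ x, |h x| ≤ M * nX (s k) x) →
      ∀ c, memT k c → ∀ n,
        |∑ i ∈ Finset.range n, c i * h (fseq i)| ≤ Bb * M * nT k c)
    -- `f = Σ g_i(f) f_i` in `X_F` for every `f ∈ X_F`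
    (hexp : ∀ f : X, ∀ t, Tendsto
      (fun n => nX t (f - ∑ i ∈ Finset.range n, g i f • fseq i)) atTop (nhds 0)) :
    ∃ V : (ℕ → ℝ) → X,
      -- `V` is well defined by `V{d_i} = Σ d_i f_i` on `Θ_F`
      (∀ c, (∀ t, memT t c) → ∀ t, Tendsto
        (fun n => nX t (V c - ∑ i ∈ Finset.range n, c i • fseq i)) atTop (nhds 0)) ∧
      (∀ f : X, V (fun i => g i f) = f) ∧
      ∀ k, ∃ C > 0, ∀ c, (∀ t, memT t c) → nX (s k) (V c) ≤ C * nT k c := by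
  let p t : Seminorm ℝ X := (hnX t).toSeminorm
  let Θ t : Submodule ℝ (ℕ → ℝ) :=
    { carrier := {c | memT t c}, zero_mem' := hT0 t, add_mem' := hTadd t _ _,
      smul_mem' := hTsmul t }
  have hbessel : ∀ k, ∃ C > 0, ∀ c, memT k c → ∀ n,
      nX (s k) (partialSum fseq c n) ≤ C * nT k c := fun k =>
    (hBessel k).imp fun _ ⟨hBb, hB⟩ =>
      ⟨hBb, fun _ hc => (p (s k)).partialSum_le_of_bessel hB hc⟩
  choose C hC hbound using hbessel
  have hcauchy : ∀ c, (∀ t, memT t c) → ∀ t, ∀ ε > 0, ∃ N, ∀ m ≥ N, ∀ n ≥ N,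
      nX t (partialSum fseq c m - partialSum fseq c n) < ε := fun c hc =>
    cauchy_partialSum_of_tail_bound (p := p) hXmono hstend
      (fun k n => hbound k _ (sub_mem (show c ∈ Θ k from hc k) (trunc_mem (hTe k) n c)))
      (fun k => by simpa using (hCB k c (hc k)).const_mul (C k))
  have hlim : ∀ c, ∃ x, (∀ t, memT t c) → ∀ t,
      Tendsto (fun n => nX t (x - partialSum fseq c n)) atTop (nhds 0) := by
    intro c
    by_cases hc : ∀ t, memT t c
    · obtain ⟨x, hx⟩ := hXcomplete _ (hcauchy c hc)
      exact ⟨x, fun _ t => (hx t).congr fun n => map_sub_rev (p t) _ _⟩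
    · exact ⟨0, fun h => absurd h hc⟩
  choose V hV using hlim
  refine ⟨V, hV, fun f => (hnX 0).eq_of_tendsto_sub (hV _ (hframe f).1 0) (hexp f 0),
    fun k => ⟨C k, hC k, fun c hc => ?_⟩⟩
  exact (p (s k)).le_of_tendsto_sub (hV c hc (s k)) (hbound k c (hc k))

/-- (Theorem diffnew, A₂ ⇒ A₁.) If `{f_i} ⊂ X_F` is a `Θ_k^*`-Bessel
sequence for `X_{s_k}^*` for every `k` and `f = Σ g_i(f) f_i` in `X_F`, then
`V{d_i} := Σ d_i f_i` is a well-defined operator `Θ_F → X_F` with `V{g_i(f)} = f` and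
`‖Vd‖_{s_k} ≤ C_k |||d|||_k`. -/
theorem statement8
    {X : Type*} [AddCommGroup X] [Module ℝ X]
    -- `X_F` with its increasing family of norms `‖·‖_s`
    (nX : ℕ → X → ℝ) (hnX : ∀ t, IsNormOn (nX t))
    (hXmono : ∀ t f, nX t f ≤ nX (t + 1) f)
    -- the Fréchet sequence space `Θ_F = ⋂ Θ_s`, each `Θ_s` a BK-space
    (memT : ℕ → (ℕ → ℝ) → Prop) (nT : ℕ → (ℕ → ℝ) → ℝ)
    (hnT : ∀ t, IsNormOn (nT t))
    (hTmono : ∀ t c, nT t c ≤ nT (t + 1) c)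
    (hTnest : ∀ t c, memT (t + 1) c → memT t c)
    (hT0 : ∀ t, memT t 0) (hTadd : ∀ t c d, memT t c → memT t d → memT t (c + d))
    (hTsmul : ∀ t (a : ℝ) c, memT t c → memT t (a • c))
    (hBK : ∀ t i, ∃ K, ∀ c, memT t c → |c i| ≤ K * nT t c)
    -- `{g_i}` is a general pre-F-frame for `X_F` w.r.t. `Θ_F`
    (g : ℕ → X →ₗ[ℝ] ℝ) (s st : ℕ → ℕ)
    (hs : Monotone s) (hstend : Tendsto s atTop atTop)
    (hst : Monotone st) (hsttend : Tendsto st atTop atTop)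
    (hsle : ∀ k, s k ≤ st k)
    (A B : ℕ → ℝ) (hA : ∀ k, 0 < A k) (hB : ∀ k, 0 < B k)
    (hframe : ∀ f : X, (∀ t, memT t (fun i => g i f)) ∧
      ∀ k, A k * nX (s k) f ≤ nT k (fun i => g i f) ∧
        nT k (fun i => g i f) ≤ B k * nX (st k) f)
    -- `X_F` is complete, the `Θ_s` are CB-spaces
    (hXcomplete : ∀ u : ℕ → X,
      (∀ t, ∀ ε > 0, ∃ N, ∀ m ≥ N, ∀ n ≥ N, nX t (u m - u n) < ε) →
      ∃ x : X, ∀ t, Tendsto (fun n => nX t (u n - x)) atTop (nhds 0))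
    (hTe : ∀ t i, memT t (e i))
    (hCB : ∀ t c, memT t c → Tendsto (fun n => nT t (c - trunc n c)) atTop (nhds 0))
    -- the sequence `{f_i}`
    (fseq : ℕ → X)
    -- `{f_i}` is a `Θ_k^*`-Bessel sequence for `X_{s_k}^*` for every `k`
    (hBessel : ∀ k, ∃ Bb > 0, ∀ (h : X →ₗ[ℝ] ℝ) (M : ℝ),
      (∀ x, |h x| ≤ M * nX (s k) x) →
      ∀ c, memT k c → ∀ n,
        |∑ i ∈ Finset.range n, c i * h (fseq i)| ≤ Bb * M * nT k c)
    -- `f = Σ g_i(f) f_i` in `X_F` for every `f ∈ X_F`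
    (hexp : ∀ f : X, ∀ t, Tendsto
      (fun n => nX t (f - ∑ i ∈ Finset.range n, g i f • fseq i)) atTop (nhds 0)) :
    ∃ V : (ℕ → ℝ) → X,
      -- `V` is well defined by `V{d_i} = Σ d_i f_i` on `Θ_F`
      (∀ c, (∀ t, memT t c) → ∀ t, Tendsto
        (fun n => nX t (V c - ∑ i ∈ Finset.range n, c i • fseq i)) atTop (nhds 0)) ∧
      (∀ f : X, V (fun i => g i f) = f) ∧
      ∀ k, ∃ C > 0, ∀ c, (∀ t, memT t c) → nX (s k) (V c) ≤ C * nT k c :=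
  statement8_general nX hnX hXmono memT nT hT0 hTadd hTsmul g s st hstend A B hframe hXcomplete hTe
    hCB fseq hBessel hexp
end

section
/- With X_s, Θ_s, ψ_j as in the weighted-Hilbert-space setup and g_j = b_jψ_j where b_j = 1 for odd j and b_j = j^r for even j (r ≥ 1 fixed), there do NOT exist constants A_s, B_s ∈ (0,∞) and indices n_s, s ∈ ℕ₀, such that A_s‖φ‖_{n_s} ≤ |||{g_j(φ)}|||_s ≤ B_s‖φ‖_{n_s} for all φ ∈ X_F. That is, {g_j} is not a strict pre-F-frame. -/
open Filter

/-!
Test the frame inequalities for `s = 0` on the basis vectors `ψ_j` themselves: they read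
`A₀ (j+1)^{n₀} ≤ |b_j| ≤ B₀ (j+1)^{n₀}`. Along odd `j + 1` this forces `n₀ = 0`, and then along
even `j + 1` it bounds `(j+1)^r` by `B₀`, which is impossible for `r ≥ 1`.
-/

theorem HilbertBasis.hasSum_repr_self {ι 𝕜 E α : Type*} [RCLike 𝕜] [NormedAddCommGroup E]
    [InnerProductSpace 𝕜 E] [AddCommMonoid α] [TopologicalSpace α]
    (ψ : HilbertBasis ι 𝕜 E) (F : ι → 𝕜 → α) (hF : ∀ i, F i 0 = 0) (j : ι) :
    HasSum (fun i => F i (ψ.repr (ψ j) i)) (F j 1) := by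
  classical
  convert hasSum_single (f := fun i => F i (ψ.repr (ψ j) i)) j fun i hi => ?_ using 1
  · simp [ψ.repr_self, lp.single_apply]
  · simp [ψ.repr_self, lp.single_apply, hi, hF]

theorem Real.sqrt_sq_mul_pow_two_mul (x : ℝ) {y : ℝ} (hy : 0 ≤ y) (t : ℕ) :
    √(x ^ 2 * y ^ (2 * t)) = |x| * y ^ t := by
  rw [pow_mul', ← mul_pow, Real.sqrt_sq_eq_abs, abs_mul, abs_of_nonneg (pow_nonneg hy t)]

theorem frame_bounds_on_basis {H : Type*} [NormedAddCommGroup H] [InnerProductSpace ℝ H]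
    (ψ : HilbertBasis ℕ ℝ H) (b : ℕ → ℝ) (A B : ℝ) (n s : ℕ)
    (h : ∀ φ : H,
      (∀ t : ℕ, Summable fun j => (ψ.repr φ j) ^ 2 * ((j : ℝ) + 1) ^ (2 * t)) →
      A * √(∑' j, (ψ.repr φ j) ^ 2 * ((j : ℝ) + 1) ^ (2 * n)) ≤
          √(∑' j, (b j * ψ.repr φ j) ^ 2 * ((j : ℝ) + 1) ^ (2 * s)) ∧
        √(∑' j, (b j * ψ.repr φ j) ^ 2 * ((j : ℝ) + 1) ^ (2 * s)) ≤
          B * √(∑' j, (ψ.repr φ j) ^ 2 * ((j : ℝ) + 1) ^ (2 * n)))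
    (j : ℕ) :
    A * ((j : ℝ) + 1) ^ n ≤ |b j| * ((j : ℝ) + 1) ^ s ∧
      |b j| * ((j : ℝ) + 1) ^ s ≤ B * ((j : ℝ) + 1) ^ n := by
  have hweighted (t : ℕ) :=
    ψ.hasSum_repr_self (fun i x => x ^ 2 * ((i : ℝ) + 1) ^ (2 * t)) (fun _ => by simp) j
  have hsampled :=
    ψ.hasSum_repr_self (fun i x => (b i * x) ^ 2 * ((i : ℝ) + 1) ^ (2 * s)) (fun _ => by simp) j
  have hj : (0 : ℝ) ≤ j + 1 := by positivity
  have := h (ψ j) fun t => (hweighted t).summable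
  simp only [(hweighted n).tsum_eq, hsampled.tsum_eq, mul_one,
    Real.sqrt_sq_mul_pow_two_mul _ hj, abs_one, one_mul] at this
  exact this

theorem exists_forall_ge_lt_mul_pow {c : ℝ} (hc : 0 < c) {k : ℕ} (hk : k ≠ 0) (C : ℝ) :
    ∃ N : ℕ, ∀ j ≥ N, C < c * ((j : ℝ) + 1) ^ k :=
  eventually_atTop.1 <|
    ((tendsto_pow_atTop hk).comp (tendsto_atTop_add_const_right _ 1 tendsto_natCast_atTop_atTop)
      |>.const_mul_atTop hc).eventually_gt_atTop C

theorem statement15_general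
    {H : Type*} [NormedAddCommGroup H] [InnerProductSpace ℝ H]
    (ψ : HilbertBasis ℕ ℝ H) (r : ℕ) (hr : 1 ≤ r)
    (b : ℕ → ℝ)
    (hb : ∀ j, b j = if (j + 1) % 2 = 1 then 1 else ((j : ℝ) + 1) ^ r) :
    ¬ ∃ (A B : ℕ → ℝ) (n : ℕ → ℕ),
        (∀ s, 0 < A s) ∧ (∀ s, 0 < B s) ∧
        ∀ (s : ℕ) (φ : H),
          (∀ t : ℕ, Summable fun j => (ψ.repr φ j) ^ 2 * ((j : ℝ) + 1) ^ (2 * t)) →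
          A s * Real.sqrt (∑' j, (ψ.repr φ j) ^ 2 * ((j : ℝ) + 1) ^ (2 * n s)) ≤
              Real.sqrt (∑' j, (b j * ψ.repr φ j) ^ 2 * ((j : ℝ) + 1) ^ (2 * s)) ∧
            Real.sqrt (∑' j, (b j * ψ.repr φ j) ^ 2 * ((j : ℝ) + 1) ^ (2 * s)) ≤
              B s * Real.sqrt (∑' j, (ψ.repr φ j) ^ 2 * ((j : ℝ) + 1) ^ (2 * n s)) := by
  rintro ⟨A, B, n, hA, hB, h⟩
  have hbounds := frame_bounds_on_basis ψ b (A 0) (B 0) (n 0) 0 (h 0)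
  rcases Nat.eq_zero_or_pos (n 0) with hn | hn
  · obtain ⟨N, hN⟩ := exists_forall_ge_lt_mul_pow one_pos (by omega : r ≠ 0) (B 0)
    have hbN : b (2 * N + 1) = ((2 * N + 1 : ℕ) + 1 : ℝ) ^ r := by
      rw [hb, if_neg (by omega)]
    have hupper := (hbounds (2 * N + 1)).2
    rw [hn, hbN, abs_of_nonneg (by positivity)] at hupper
    linarith [hN (2 * N + 1) (by omega)]
  · obtain ⟨N, hN⟩ := exists_forall_ge_lt_mul_pow (hA 0) hn.ne' 1
    have hbN : b (2 * N) = 1 := by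
      rw [hb, if_pos (by omega)]
    have hlower := (hbounds (2 * N)).1
    rw [hbN, abs_one, pow_zero, mul_one] at hlower
    linarith [hN (2 * N) (by omega)]

/-- In the weighted-Hilbert-space setup with `b_j = 1` for `j+1` odd and
`b_j = (j+1)^r` for `j+1` even (`r ≥ 1`), and `g_j(φ) = b_j ⟨φ, ψ_j⟩`, there are NO
constants `A_s, B_s > 0` and indices `n_s` with
`A_s‖φ‖_{n_s} ≤ |||{g_j(φ)}|||_s ≤ B_s‖φ‖_{n_s}` for all `φ ∈ X_F` and all `s`; that is,
`{g_j}` is not a strict pre-F-frame. -/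
theorem statement15
    {H : Type*} [NormedAddCommGroup H] [InnerProductSpace ℝ H] [CompleteSpace H]
    (ψ : HilbertBasis ℕ ℝ H) (r : ℕ) (hr : 1 ≤ r)
    (b : ℕ → ℝ)
    (hb : ∀ j, b j = if (j + 1) % 2 = 1 then 1 else ((j : ℝ) + 1) ^ r) :
    ¬ ∃ (A B : ℕ → ℝ) (n : ℕ → ℕ),
        (∀ s, 0 < A s) ∧ (∀ s, 0 < B s) ∧
        ∀ (s : ℕ) (φ : H),
          (∀ t : ℕ, Summable fun j => (ψ.repr φ j) ^ 2 * ((j : ℝ) + 1) ^ (2 * t)) →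
          A s * Real.sqrt (∑' j, (ψ.repr φ j) ^ 2 * ((j : ℝ) + 1) ^ (2 * n s)) ≤
              Real.sqrt (∑' j, (b j * ψ.repr φ j) ^ 2 * ((j : ℝ) + 1) ^ (2 * s)) ∧
            Real.sqrt (∑' j, (b j * ψ.repr φ j) ^ 2 * ((j : ℝ) + 1) ^ (2 * s)) ≤
              B s * Real.sqrt (∑' j, (ψ.repr φ j) ^ 2 * ((j : ℝ) + 1) ^ (2 * n s)) :=
  statement15_general ψ r hr b hb
end

section
/- Let {g_i} be a general pre-F-frame for X_F with respect to Θ_F and suppose the analysis operator U : X_F → Θ_F, Uf = {g_i(f)}, is surjective onto Θ_F. Then {g_i} is a general F-frame, i.e., there exists a continuous operator V : Θ_F → X_F with V{g_i(f)} = f for all f ∈ X_F (namely V = U⁻¹, continuous by the closedness of R(U) and continuity of U⁻¹ on R(U)). -/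
open Filter Finset

/-- If the analysis operator `U` of a general pre-F-frame is surjective
onto `Θ_F`, then `{g_i}` is a general F-frame: `V = U⁻¹` is a continuous operator
`Θ_F → X_F` with `V{g_i(f)} = f` for all `f ∈ X_F`. -/
theorem statement17
    {X : Type*} [AddCommGroup X] [Module ℝ X]
    -- `X_F` with its increasing family of norms `‖·‖_s`
    (nX : ℕ → X → ℝ) (hnX : ∀ t, IsNormOn (nX t))
    (hXmono : ∀ t f, nX t f ≤ nX (t + 1) f)
    -- the Fréchet sequence space `Θ_F = ⋂ Θ_s`, each `Θ_s` a BK-space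
    (memT : ℕ → (ℕ → ℝ) → Prop) (nT : ℕ → (ℕ → ℝ) → ℝ)
    (hnT : ∀ t, IsNormOn (nT t))
    (hTmono : ∀ t c, nT t c ≤ nT (t + 1) c)
    (hTnest : ∀ t c, memT (t + 1) c → memT t c)
    (hT0 : ∀ t, memT t 0) (hTadd : ∀ t c d, memT t c → memT t d → memT t (c + d))
    (hTsmul : ∀ t (a : ℝ) c, memT t c → memT t (a • c))
    (hBK : ∀ t i, ∃ K, ∀ c, memT t c → |c i| ≤ K * nT t c)
    -- `{g_i}` is a general pre-F-frame for `X_F` w.r.t. `Θ_F`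
    (g : ℕ → X →ₗ[ℝ] ℝ) (s st : ℕ → ℕ)
    (hs : Monotone s) (hstend : Tendsto s atTop atTop)
    (hst : Monotone st) (hsttend : Tendsto st atTop atTop)
    (hsle : ∀ k, s k ≤ st k)
    (A B : ℕ → ℝ) (hA : ∀ k, 0 < A k) (hB : ∀ k, 0 < B k)
    (hframe : ∀ f : X, (∀ t, memT t (fun i => g i f)) ∧
      ∀ k, A k * nX (s k) f ≤ nT k (fun i => g i f) ∧
        nT k (fun i => g i f) ≤ B k * nX (st k) f)
    -- `U` is surjective onto `Θ_F`
    (hsurj : ∀ c : ℕ → ℝ, (∀ t, memT t c) → ∃ f : X, (fun i => g i f) = c) :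
    ∃ V : (ℕ → ℝ) → X,
      (∀ f : X, V (fun i => g i f) = f) ∧
      (∀ c, (∀ t, memT t c) → (fun i => g i (V c)) = c) ∧
      ∀ k, ∃ C > 0, ∀ c, (∀ t, memT t c) → nX (s k) (V c) ≤ C * nT k c := by
  classical
  -- injectivity of U
  have hinj : ∀ f f' : X, (fun i => g i f) = (fun i => g i f') → f = f' := by
    intro f f' h
    have hz : (fun i => g i (f - f')) = (0 : ℕ → ℝ) := by
      funext i
      simp only [map_sub]
      have := congrFun h i
      simp [this]
    have h0 : nT 0 (fun i => g i (f - f')) = 0 := by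
      rw [hz]
      have := (hnT 0).2.2.1 0 0
      simpa using this
    have hle := ((hframe (f - f')).2 0).1
    rw [h0] at hle
    have hx0 : nX (s 0) (f - f') = 0 := by
      have hge := (hnX (s 0)).1 (f - f')
      nlinarith [hA 0]
    have := (hnX (s 0)).2.2.2 _ hx0
    exact sub_eq_zero.mp this
  set V : (ℕ → ℝ) → X := fun c =>
    if h : ∀ t, memT t c then (hsurj c h).choose else 0 with hV
  have hVU : ∀ c (h : ∀ t, memT t c), (fun i => g i (V c)) = c := by
    intro c h
    rw [hV]
    simp only [dif_pos h]
    exact (hsurj c h).choose_spec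
  refine ⟨V, ?_, hVU, ?_⟩
  · intro f
    exact hinj _ _ (hVU _ (hframe f).1)
  · intro k
    refine ⟨(A k)⁻¹, inv_pos.mpr (hA k), fun c hc => ?_⟩
    have hle := ((hframe (V c)).2 k).1
    rw [hVU c hc] at hle
    rw [inv_mul_eq_div, le_div_iff₀ (hA k)]
    linarith [hle]
end

section
/- Let {g_i} be a general pre-F-frame for X_F with respect to Θ_F where Θ_s are CB-spaces, and suppose there exists {f_i} ⊂ X_F such that for every k ∈ ℕ₀ and every f ∈ X_{s̃_k}, f = Σ_{i=1}^∞ g_i^{s̃_k}(f) f_i with convergence in ‖·‖_{s_k}-norm, and {f_i} is a Θ_k*-Bessel sequence for X_{s_k}*. Then f = Σ_{i=1}^∞ g_i(f) f_i with convergence in X_F (i.e., in every norm ‖·‖_s) for every f ∈ X_F. -/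
open Filter Finset

/-- (Theorem diffnew, A₃ ⇒ expansions in `X_F`.) If `{f_i} ⊂ X_F` is,
for every `k`, a `Θ_k^*`-Bessel sequence for `X_{s_k}^*` giving the expansions
`f = Σ g_i^{s̃_k}(f) f_i` in `‖·‖_{s_k}`-norm for `f ∈ X_{s̃_k}`, then
`f = Σ g_i(f) f_i` with convergence in `X_F` (in every norm) for every `f ∈ X_F`. -/
theorem statement19
    {E : Type*} [AddCommGroup E] [Module ℝ E]
    -- the Banach spaces `X_s`, realized as nested subspaces of an ambient space `E`
    (Xmem : ℕ → E → Prop) (nX : ℕ → E → ℝ)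
    (hnX : ∀ t, IsNormOn (nX t))
    (hXmono : ∀ t x, nX t x ≤ nX (t + 1) x)
    (hXnest : ∀ t x, Xmem (t + 1) x → Xmem t x)
    (hX0 : ∀ t, Xmem t 0) (hXadd : ∀ t x y, Xmem t x → Xmem t y → Xmem t (x + y))
    (hXsmul : ∀ t (a : ℝ) x, Xmem t x → Xmem t (a • x))
    -- each `X_s` is complete
    (hXcomplete : ∀ t (u : ℕ → E), (∀ n, Xmem t (u n)) →
      (∀ ε > 0, ∃ N, ∀ m ≥ N, ∀ n ≥ N, nX t (u m - u n) < ε) →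
      ∃ x, Xmem t x ∧ Tendsto (fun n => nX t (u n - x)) atTop (nhds 0))
    -- `X_F = ⋂ X_s` is dense in each `X_s`
    (hdense : ∀ t x, Xmem t x → ∀ ε > 0, ∃ y, (∀ u, Xmem u y) ∧ nX t (x - y) < ε)
    -- the BK-spaces `Θ_s` (here CB-spaces: canonical vectors form a Schauder basis)
    (memT : ℕ → (ℕ → ℝ) → Prop) (nT : ℕ → (ℕ → ℝ) → ℝ)
    (hnT : ∀ t, IsNormOn (nT t))
    (hTmono : ∀ t c, nT t c ≤ nT (t + 1) c)
    (hTnest : ∀ t c, memT (t + 1) c → memT t c)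
    (hT0 : ∀ t, memT t 0) (hTadd : ∀ t c d, memT t c → memT t d → memT t (c + d))
    (hTsmul : ∀ t (a : ℝ) c, memT t c → memT t (a • c))
    (hTcomplete : ∀ t (u : ℕ → (ℕ → ℝ)), (∀ n, memT t (u n)) →
      (∀ ε > 0, ∃ N, ∀ m ≥ N, ∀ n ≥ N, nT t (u m - u n) < ε) →
      ∃ c, memT t c ∧ Tendsto (fun n => nT t (u n - c)) atTop (nhds 0))
    (hBK : ∀ t i, ∃ K, ∀ c, memT t c → |c i| ≤ K * nT t c)
    (hTe : ∀ t i, memT t (e i))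
    (hCB : ∀ t c, memT t c → Tendsto (fun n => nT t (c - trunc n c)) atTop (nhds 0))
    -- `{g_i}` is a general pre-F-frame (each `g i` is given together with its unique
    -- continuous extension to the spaces `X_{s̃_k}`)
    (g : ℕ → E →ₗ[ℝ] ℝ) (s st : ℕ → ℕ)
    (hs : Monotone s) (hstend : Tendsto s atTop atTop)
    (hst : Monotone st) (hsttend : Tendsto st atTop atTop)
    (hsle : ∀ k, s k ≤ st k)
    (hgext : ∀ k i, ∃ M, ∀ x, Xmem (st k) x → |g i x| ≤ M * nX (st k) x)
    (A B : ℕ → ℝ) (hA : ∀ k, 0 < A k) (hB : ∀ k, 0 < B k)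
    (hframe : ∀ x : E, (∀ t, Xmem t x) → (∀ t, memT t (fun i => g i x)) ∧
      ∀ k, A k * nX (s k) x ≤ nT k (fun i => g i x) ∧
        nT k (fun i => g i x) ≤ B k * nX (st k) x)
    -- the sequence `{f_i} ⊂ X_F`
    (fseq : ℕ → E) (hfmem : ∀ i t, Xmem t (fseq i))
    -- for every `k`, `{f_i}` is a `Θ_k^*`-Bessel sequence for `X_{s_k}^*`
    (hBessel : ∀ k, ∃ Bb > 0, ∀ (h : E →ₗ[ℝ] ℝ) (M : ℝ),
      (∀ x, Xmem (s k) x → |h x| ≤ M * nX (s k) x) →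
      ∀ c, memT k c → ∀ n,
        |∑ i ∈ Finset.range n, c i * h (fseq i)| ≤ Bb * M * nT k c)
    -- expansions in each `X_{s̃_k}`, convergent in `‖·‖_{s_k}`-norm
    (hexp : ∀ k, ∀ x : E, Xmem (st k) x → Tendsto
      (fun n => nX (s k) (x - ∑ i ∈ Finset.range n, g i x • fseq i)) atTop (nhds 0)) :
    -- conclusion: expansions in `X_F`, i.e. in every norm `‖·‖_t`
    ∀ x : E, (∀ t, Xmem t x) → ∀ t, Tendsto
      (fun n => nX t (x - ∑ i ∈ Finset.range n, g i x • fseq i)) atTop (nhds 0) := by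
  intro x hx t
  obtain ⟨k, hk⟩ := (hstend.eventually (eventually_ge_atTop t)).exists
  have hmono : ∀ a b, a ≤ b → ∀ y, nX a y ≤ nX b y := by
    intro a b hab y
    induction b, hab using Nat.le_induction with
    | base => exact le_refl _
    | succ n hn ih => exact ih.trans (hXmono n y)
  exact squeeze_zero (fun n => (hnX t).1 _) (fun n => hmono t (s k) hk _)
    (hexp k x (hx (st k)))
end
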